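/- arXiv:2008.12160 — 5 statements merged into one kernel-verified Lean document; each statement's English description precedes it below -/
import Mathlib

section
/- Let (b_h)_{h≥0} be a sequence with values in F_2 and let (s_i)_{i≥1} be the associated generalized Rueppel sequence: s_i = 1 iff i = n_h for some h ≥ 0, where n_0 = 1 and n_{h+1} = 2n_h + b_h. Then (s_i) satisfies the PLCP relation s_{2i+1} = s_{2i} + s_i for all i ≥ 1 (and s_1 = 1). -/
/-- The generalized Rueppel sequence `s` over `F₂` associated with a
`{0,1}`-sequence `b` (i.e. `s i = 1` iff `i = n h` for some `h`, where `n 0 = 1`,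
`n (h+1) = 2 * n h + b h`) satisfies `s 1 = 1` and the PLCP relation
`s (2i+1) = s (2i) + s i` for all `i ≥ 1`. -/
theorem stmt9 (b : ℕ → ℕ) (hb : ∀ h, b h = 0 ∨ b h = 1)
    (n : ℕ → ℕ) (hn0 : n 0 = 1) (hns : ∀ h, n (h + 1) = 2 * n h + b h)
    (s : ℕ → ZMod 2) (hs : ∀ i, s i = 1 ↔ ∃ h, i = n h) :
    s 1 = 1 ∧ ∀ i ≥ 1, s (2 * i + 1) = s (2 * i) + s i := by
  have hpos : ∀ h, 1 ≤ n h := by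
    intro h
    induction h with
    | zero => omega
    | succ k ih => have := hns k; omega
  have hmono : StrictMono n := strictMono_nat_of_lt_succ (fun k => by
    have := hns k; have := hpos k; omega)
  have hinj := hmono.injective
  have h01 : ∀ x : ZMod 2, x = 0 ∨ x = 1 := by decide
  constructor
  · exact (hs 1).2 ⟨0, hn0.symm⟩
  intro i hi
  rcases h01 (s i) with h0 | h1
  · have hni : ¬ ∃ h, i = n h := by
      intro he
      have := (hs i).2 he
      rw [h0] at this
      exact absurd this (by decide)
    have h2i : s (2 * i) = 0 := by
      rcases h01 (s (2 * i)) with h | h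
      · exact h
      exfalso
      obtain ⟨k, hk⟩ := (hs _).1 h
      cases k with
      | zero => omega
      | succ m =>
        have hm := hns m
        rcases hb m with hbm | hbm
        · exact hni ⟨m, by omega⟩
        · omega
    have h2i1 : s (2 * i + 1) = 0 := by
      rcases h01 (s (2 * i + 1)) with h | h
      · exact h
      exfalso
      obtain ⟨k, hk⟩ := (hs _).1 h
      cases k with
      | zero => omega
      | succ m =>
        have hm := hns m
        rcases hb m with hbm | hbm
        · omega
        · exact hni ⟨m, by omega⟩
    rw [h0, h2i, h2i1]; decide
  · obtain ⟨h, hih⟩ := (hs i).1 h1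
    rcases hb h with hb0 | hb1
    · have h2i : s (2 * i) = 1 := (hs _).2 ⟨h + 1, by have := hns h; omega⟩
      have h2i1 : s (2 * i + 1) = 0 := by
        rcases h01 (s (2 * i + 1)) with h' | h'
        · exact h'
        exfalso
        obtain ⟨k, hk⟩ := (hs _).1 h'
        cases k with
        | zero => omega
        | succ m =>
          have hm := hns m
          rcases hb m with hbm | hbm
          · omega
          · have heq : n m = n h := by omega
            have : m = h := hinj heq
            subst this
            have := hns m; omega
      rw [h2i1, h2i, h1]; decide
    · have h2i1 : s (2 * i + 1) = 1 := (hs _).2 ⟨h + 1, by have := hns h; omega⟩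
      have h2i : s (2 * i) = 0 := by
        rcases h01 (s (2 * i)) with h' | h'
        · exact h'
        exfalso
        obtain ⟨k, hk⟩ := (hs _).1 h'
        cases k with
        | zero => omega
        | succ m =>
          have hm := hns m
          rcases hb m with hbm | hbm
          · have heq : n m = n h := by omega
            have : m = h := hinj heq
            subst this
            have := hns m; omega
          · omega
      rw [h2i1, h2i, h1]; decide
end

section
/- Let (b_h)_{h≥0} be a {0,1}-sequence and (s_i)_{i≥1} the associated generalized Rueppel sequence (s_i = 1 iff i ∈ {n_h : h ≥ 0}, where n_0 = 1, n_{h+1} = 2n_h + b_h). Then (s_i) is a 2-automatic sequence if and only if (b_h) is eventually periodic. -/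
/-- The 2-kernel of a sequence: the set of subsequences `n ↦ s (2^k * n + j)`,
`k ≥ 0`, `0 ≤ j < 2^k`. -/
def twoKernel (s : ℕ → ZMod 2) : Set (ℕ → ZMod 2) :=
  {t | ∃ k j : ℕ, j < 2 ^ k ∧ t = fun n => s (2 ^ k * n + j)}

/-- A sequence is 2-automatic iff its 2-kernel is finite. -/
def IsTwoAutomatic (s : ℕ → ZMod 2) : Prop := (twoKernel s).Finite


def wv (b : ℕ → ℕ) : ℕ → ℕ → ℕ
  | _, 0 => 0
  | a, k+1 => 2 * wv b a k + b (a + k)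

lemma wv_lt (b : ℕ → ℕ) (hb : ∀ h, b h = 0 ∨ b h = 1) (a k : ℕ) : wv b a k < 2 ^ k := by
  induction k with
  | zero => simp [wv]
  | succ k ih =>
    have := hb (a + k)
    simp only [wv, pow_succ]
    omega

lemma wv_left (b : ℕ → ℕ) (a k : ℕ) : wv b a (k+1) = b a * 2 ^ k + wv b (a+1) k := by
  induction k generalizing a with
  | zero => simp [wv]
  | succ k ih =>
    have h1 : wv b a (k+2) = 2 * wv b a (k+1) + b (a + (k+1)) := rfl
    have h2 : wv b (a+1) (k+1) = 2 * wv b (a+1) k + b (a + 1 + k) := rfl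
    rw [h1, ih a, h2]
    have : a + (k+1) = a + 1 + k := by ring
    rw [this]
    ring

lemma n_add (b : ℕ → ℕ) (n : ℕ → ℕ) (hns : ∀ h, n (h + 1) = 2 * n h + b h) (a k : ℕ) :
    n (a + k) = 2 ^ k * n a + wv b a k := by
  induction k with
  | zero => simp [wv]
  | succ k ih =>
    have : a + (k+1) = (a + k) + 1 := rfl
    rw [this, hns, ih]
    show _ = 2 ^ (k+1) * n a + (2 * wv b a k + b (a + k))
    ring

lemma n_pos (b : ℕ → ℕ) (n : ℕ → ℕ) (hn0 : n 0 = 1) (hns : ∀ h, n (h + 1) = 2 * n h + b h)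
    (h : ℕ) : 1 ≤ n h := by
  induction h with
  | zero => omega
  | succ h ih => rw [hns]; omega

lemma n_mono (b : ℕ → ℕ) (n : ℕ → ℕ) (hn0 : n 0 = 1) (hns : ∀ h, n (h + 1) = 2 * n h + b h) :
    StrictMono n := by
  apply strictMono_nat_of_lt_succ
  intro h
  have := n_pos b n hn0 hns h
  rw [hns]; omega

lemma n_lt (b : ℕ → ℕ) (hb : ∀ h, b h = 0 ∨ b h = 1) (n : ℕ → ℕ) (hn0 : n 0 = 1)
    (hns : ∀ h, n (h + 1) = 2 * n h + b h) (h : ℕ) : n h < 2 ^ (h+1) := by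
  induction h with
  | zero => simp [hn0]
  | succ h ih =>
    have := hb h
    rw [hns]
    rw [pow_succ]
    omega

lemma zmod2_cases (x : ZMod 2) : x = 0 ∨ x = 1 := by revert x; decide

lemma zmod2_ext {x y : ZMod 2} (h : x = 1 ↔ y = 1) : x = y := by
  rcases zmod2_cases x with hx | hx <;> rcases zmod2_cases y with hy | hy <;> simp_all

lemma key2 (b : ℕ → ℕ) (hb : ∀ h, b h = 0 ∨ b h = 1)
    (n : ℕ → ℕ) (hn0 : n 0 = 1) (hns : ∀ h, n (h + 1) = 2 * n h + b h)
    (s : ℕ → ZMod 2) (hs : ∀ i, s i = 1 ↔ ∃ h, i = n h)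
    (k j : ℕ) (hj : j < 2 ^ k) (m : ℕ) (hm : 1 ≤ m) :
    s (2 ^ k * m + j) = 1 ↔ ∃ a, n a = m ∧ wv b a k = j := by
  rw [hs]
  constructor
  · rintro ⟨h, hh⟩
    have hpos : 0 < 2 ^ k := Nat.pow_pos (by norm_num)
    have hk : k ≤ h := by
      by_contra hlt
      push_neg at hlt
      have h1 : n h < 2 ^ (h+1) := n_lt b hb n hn0 hns h
      have h2 : 2 ^ (h+1) ≤ 2 ^ k := Nat.pow_le_pow_right (by norm_num) (by omega)
      have h3 : 2 ^ k ≤ 2 ^ k * m := Nat.le_mul_of_pos_right _ hm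
      omega
    obtain ⟨x, rfl⟩ : ∃ x, h = x + k := ⟨h - k, by omega⟩
    rw [n_add b n hns x k] at hh
    have hw : wv b x k < 2 ^ k := wv_lt b hb x k
    refine ⟨x, ?_, ?_⟩
    · have := congrArg (· / 2 ^ k) hh
      simpa [Nat.mul_add_div hpos, Nat.div_eq_of_lt hj, Nat.div_eq_of_lt hw] using this.symm
    · have := congrArg (· % 2 ^ k) hh
      simpa [Nat.mul_add_mod, Nat.mod_eq_of_lt hj, Nat.mod_eq_of_lt hw] using this.symm
  · rintro ⟨a, rfl, rfl⟩
    exact ⟨a + k, (n_add b n hns a k).symm⟩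

lemma key3 (b : ℕ → ℕ) (hb : ∀ h, b h = 0 ∨ b h = 1)
    (n : ℕ → ℕ) (hn0 : n 0 = 1) (hns : ∀ h, n (h + 1) = 2 * n h + b h)
    (s : ℕ → ZMod 2) (hs : ∀ i, s i = 1 ↔ ∃ h, i = n h)
    (k j : ℕ) (hj : j < 2 ^ k) (a : ℕ) :
    s (2 ^ k * n a + j) = 1 ↔ wv b a k = j := by
  rw [key2 b hb n hn0 hns s hs k j hj (n a) (n_pos b n hn0 hns a)]
  constructor
  · rintro ⟨a', ha', rfl⟩
    rw [(n_mono b n hn0 hns).injective ha']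
  · intro h; exact ⟨a, rfl, h⟩


lemma wv_per (b : ℕ → ℕ) (N p : ℕ) (hper : ∀ h ≥ N, b (h + p) = b h)
    (a : ℕ) (ha : N ≤ a) (k : ℕ) : wv b (a + p) k = wv b a k := by
  induction k with
  | zero => simp [wv]
  | succ k ih =>
    show 2 * wv b (a+p) k + b (a + p + k) = 2 * wv b a k + b (a + k)
    rw [ih]
    have : a + p + k = (a + k) + p := by ring
    rw [this, hper (a + k) (by omega)]

lemma dir_mpr (b : ℕ → ℕ) (hb : ∀ h, b h = 0 ∨ b h = 1)
    (n : ℕ → ℕ) (hn0 : n 0 = 1) (hns : ∀ h, n (h + 1) = 2 * n h + b h)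
    (s : ℕ → ZMod 2) (hs : ∀ i, s i = 1 ↔ ∃ h, i = n h)
    (N p : ℕ) (hp : 1 ≤ p) (hper : ∀ h ≥ N, b (h + p) = b h) :
    (twoKernel s).Finite := by
  set θ : (ℕ → ZMod 2) → ZMod 2 × (Fin (N+p) → ZMod 2) :=
    fun t => (t 0, fun i => t (n i)) with hθ
  apply Set.Finite.of_finite_image (f := θ) (Set.toFinite _)
  rintro t ⟨k, j, hj, rfl⟩ t' ⟨k', j', hj', rfl⟩ heq
  have h0 : s (2 ^ k * 0 + j) = s (2 ^ k' * 0 + j') := congrArg Prod.fst heq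
  have hfin : ∀ i : Fin (N+p), s (2 ^ k * n i + j) = s (2 ^ k' * n i + j') :=
    fun i => congrFun (congrArg Prod.snd heq) i
  have hA : ∀ a, (wv b a k = j ↔ wv b a k' = j') := by
    intro a
    induction a using Nat.strong_induction_on with
    | _ a ih =>
      by_cases ha : a < N + p
      · rw [← key3 b hb n hn0 hns s hs k j hj a, ← key3 b hb n hn0 hns s hs k' j' hj' a,
          hfin ⟨a, ha⟩]
      · push_neg at ha
        have h1 : a - p + p = a := by omega
        have h2 : N ≤ a - p := by omega
        have e1 : wv b a k = wv b (a - p) k := by rw [← h1, wv_per b N p hper _ h2, h1]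
        have e2 : wv b a k' = wv b (a - p) k' := by rw [← h1, wv_per b N p hper _ h2, h1]
        rw [e1, e2]
        exact ih (a - p) (by omega)
  funext m
  rcases Nat.eq_zero_or_pos m with rfl | hm
  · exact h0
  · apply zmod2_ext
    rw [key2 b hb n hn0 hns s hs k j hj m hm, key2 b hb n hn0 hns s hs k' j' hj' m hm]
    exact exists_congr fun a => and_congr_right fun _ => hA a

lemma dir_mp (b : ℕ → ℕ) (hb : ∀ h, b h = 0 ∨ b h = 1)
    (n : ℕ → ℕ) (hn0 : n 0 = 1) (hns : ∀ h, n (h + 1) = 2 * n h + b h)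
    (s : ℕ → ZMod 2) (hs : ∀ i, s i = 1 ↔ ∃ h, i = n h)
    (hfin : (twoKernel s).Finite) :
    ∃ N : ℕ, ∃ p ≥ 1, ∀ h ≥ N, b (h + p) = b h := by
  classical
  set C := hfin.toFinset.card with hC
  set P : ℕ → Finset ℕ :=
    fun k => (Finset.range (2^k)).filter (fun j => ∃ a, wv b a k = j) with hP
  have hPmem : ∀ k a, wv b a k ∈ P k := by
    intro k a
    simp only [hP, Finset.mem_filter, Finset.mem_range]
    exact ⟨wv_lt b hb a k, a, rfl⟩
  have hPlt : ∀ k, ∀ j ∈ P k, j < 2 ^ k ∧ ∃ a, wv b a k = j := by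
    intro k j hj
    simpa only [hP, Finset.mem_filter, Finset.mem_range] using hj
  have hcard : ∀ k, (P k).card ≤ C := by
    intro k
    apply Finset.card_le_card_of_injOn (fun j => (fun m => s (2^k * m + j)))
    · intro j hj
      rw [Finset.mem_coe, Set.Finite.mem_toFinset]
      exact ⟨k, j, (hPlt k j hj).1, rfl⟩
    · intro j hj j' hj' heq
      obtain ⟨hjlt, a, ha⟩ := hPlt k j hj
      obtain ⟨hjlt', _⟩ := hPlt k j' hj'
      have h1 : s (2^k * n a + j) = 1 := by
        rw [key3 b hb n hn0 hns s hs k j hjlt a]; exact ha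
      have h2 : s (2^k * n a + j') = 1 := by
        have hc := congrFun heq (n a)
        simp only at hc
        rw [← hc]; exact h1
      rw [key3 b hb n hn0 hns s hs k j' hjlt' a] at h2
      omega
  have hhalf : ∀ k a, wv b a (k+1) / 2 = wv b a k := by
    intro k a
    have : wv b a (k+1) = 2 * wv b a k + b (a + k) := rfl
    have := hb (a + k)
    omega
  have hsurj : ∀ k, Set.SurjOn (fun j => j / 2) (P (k+1) : Set ℕ) (P k : Set ℕ) := by
    intro k j hj
    obtain ⟨_, a, ha⟩ := hPlt k j (by exact_mod_cast hj)
    exact ⟨wv b a (k+1), by exact_mod_cast hPmem (k+1) a, by simp [hhalf k a, ha]⟩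
  have hmono : ∀ k, (P k).card ≤ (P (k+1)).card :=
    fun k => Finset.card_le_card_of_surjOn (fun j => j / 2) (hsurj k)
  have hone : 1 ≤ (P 1).card := Finset.card_pos.2 ⟨wv b 0 1, hPmem 1 0⟩
  -- find k ≥ 1 with equal consecutive cards
  have hexk : ∃ k, 1 ≤ k ∧ (P k).card = (P (k+1)).card := by
    by_contra hne
    push_neg at hne
    have grow : ∀ m, 1 + m ≤ (P (1 + m)).card := by
      intro m
      induction m with
      | zero => simpa using hone
      | succ m ih =>
        have h1 := hmono (1 + m)
        have h2 := hne (1 + m) (by omega)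
        have : 1 + (m + 1) ≤ (P (1 + m + 1)).card := by omega
        simpa [Nat.add_assoc] using this
    have := grow C
    have := hcard (1 + C)
    omega
  obtain ⟨k, hk1, hkc⟩ := hexk
  -- injectivity of halving on P (k+1)
  have himg : (P (k+1)).image (fun j => j / 2) = P k := by
    apply Finset.Subset.antisymm
    · intro j hj
      rw [Finset.mem_image] at hj
      obtain ⟨j', hj', rfl⟩ := hj
      obtain ⟨_, a, ha⟩ := hPlt (k+1) j' hj'
      rw [← ha, hhalf k a]
      exact hPmem k a
    · intro j hj
      obtain ⟨j', hj', hjj⟩ := hsurj k hj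
      rw [Finset.mem_image]
      exact ⟨j', by exact_mod_cast hj', hjj⟩
  have hinj : Set.InjOn (fun j => j / 2) (P (k+1) : Set ℕ) := by
    apply Finset.injOn_of_card_image_eq
    rw [himg, hkc]
  -- determinism
  have hdet : ∀ a a', wv b a k = wv b a' k → wv b (a+1) k = wv b (a'+1) k := by
    intro a a' hww
    have e : wv b a (k+1) = wv b a' (k+1) := by
      apply hinj (by exact_mod_cast hPmem (k+1) a) (by exact_mod_cast hPmem (k+1) a')
      simp only [hhalf, hww]
    have l1 := wv_left b a k
    have l2 := wv_left b a' k
    have m1 : wv b (a+1) k < 2 ^ k := wv_lt b hb (a+1) k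
    have m2 : wv b (a'+1) k < 2 ^ k := wv_lt b hb (a'+1) k
    have hba := hb a
    have hba' := hb a'
    -- from e, l1, l2: b a * 2^k + r = b a' * 2^k + r' with r,r' < 2^k, b's ∈ {0,1}
    rcases hba with h | h <;> rcases hba' with h' | h' <;> rw [h] at l1 <;> rw [h'] at l2 <;> omega
  have hdet' : ∀ a a', wv b a k = wv b a' k → ∀ m, wv b (a+m) k = wv b (a'+m) k := by
    intro a a' hww m
    induction m with
    | zero => simpa using hww
    | succ m ih =>
      have := hdet (a + m) (a' + m) ih
      simpa [Nat.add_assoc] using this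
  -- pigeonhole
  have hpig : ∃ a1 a2, a1 < a2 ∧ wv b a1 k = wv b a2 k := by
    obtain ⟨x, hx, y, hy, hxy, hf⟩ :=
      Finset.exists_ne_map_eq_of_card_lt_of_maps_to
        (s := Finset.range (2^k + 1)) (t := Finset.range (2^k))
        (by simp) (f := fun a => wv b a k) (fun a _ => by simpa using wv_lt b hb a k)
    rcases lt_or_gt_of_ne hxy with h | h
    · exact ⟨x, y, h, hf⟩
    · exact ⟨y, x, h, hf.symm⟩
  obtain ⟨a1, a2, ha12, heq⟩ := hpig
  -- extract b from wv
  obtain ⟨k0, rfl⟩ : ∃ k0, k = k0 + 1 := ⟨k - 1, by omega⟩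
  have hbv : ∀ x, b x = wv b x (k0+1) / 2 ^ k0 := by
    intro x
    rw [wv_left b x k0]
    have hr : wv b (x+1) k0 < 2 ^ k0 := wv_lt b hb (x+1) k0
    rw [mul_comm, Nat.mul_add_div (Nat.pow_pos (n := k0) (by norm_num)),
      Nat.div_eq_of_lt hr]
    omega
  refine ⟨a1, a2 - a1, by omega, fun h hh => ?_⟩
  obtain ⟨m, rfl⟩ : ∃ m, h = a1 + m := ⟨h - a1, by omega⟩
  have e1 : a1 + m + (a2 - a1) = a2 + m := by omega
  rw [hbv (a1 + m + (a2 - a1)), hbv (a1 + m), e1, ← hdet' a1 a2 heq m]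

/-- The generalized Rueppel sequence `s` associated with a
`{0,1}`-sequence `b` is 2-automatic iff `b` is eventually periodic. -/
theorem stmt10 (b : ℕ → ℕ) (hb : ∀ h, b h = 0 ∨ b h = 1)
    (n : ℕ → ℕ) (hn0 : n 0 = 1) (hns : ∀ h, n (h + 1) = 2 * n h + b h)
    (s : ℕ → ZMod 2) (hs : ∀ i, s i = 1 ↔ ∃ h, i = n h) :
    IsTwoAutomatic s ↔ ∃ N : ℕ, ∃ p ≥ 1, ∀ h ≥ N, b (h + p) = b h := by
  constructor
  · exact dir_mp b hb n hn0 hns s hs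
  · rintro ⟨N, p, hp, hper⟩
    exact dir_mpr b hb n hn0 hns s hs N p hp hper
end

section
/- The set of prefixes of an infinite word w over a finite alphabet is a regular language if and only if w is eventually (ultimately) periodic. -/
/-- Normalization map: collapse `ℕ` onto `[0, N+p)` respecting eventual periodicity. -/
private def stmt11f (N p m : ℕ) : ℕ := if m < N + p then m else N + (m - N) % p

private lemma stmt11f_lt (N p m : ℕ) (hp : 1 ≤ p) : stmt11f N p m < N + p := by
  unfold stmt11f; split
  · assumption
  · have := Nat.mod_lt (m - N) (show 0 < p by omega); omega

private lemma stmt11f_of_ge (N p m : ℕ) (hp : 1 ≤ p) (h : N ≤ m) :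
    stmt11f N p m = N + (m - N) % p := by
  unfold stmt11f; split
  · have hlt : m - N < p := by omega
    rw [Nat.mod_eq_of_lt hlt]; omega
  · rfl

private lemma stmt11f_step (N p m : ℕ) (hp : 1 ≤ p) :
    stmt11f N p (stmt11f N p m + 1) = stmt11f N p (m + 1) := by
  rcases lt_or_ge m (N + p) with h | h
  · have : stmt11f N p m = m := by unfold stmt11f; simp [h]
    rw [this]
  · have hf : stmt11f N p m = N + (m - N) % p := stmt11f_of_ge N p m hp (by omega)
    rw [hf, stmt11f_of_ge N p (N + (m - N) % p + 1) hp (by omega),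
        stmt11f_of_ge N p (m + 1) hp (by omega)]
    have h1 : N + (m - N) % p + 1 - N = (m - N) % p + 1 := by omega
    have h2 : m + 1 - N = (m - N) + 1 := by omega
    rw [h1, h2, Nat.mod_add_mod]

private lemma stmt11_w_mod {α : Type*} (w : ℕ → α) (N p : ℕ) (hp : 1 ≤ p)
    (hper : ∀ m ≥ N, w (m + p) = w m) : ∀ j, w (N + j) = w (N + j % p) := by
  intro j
  induction j using Nat.strong_induction_on with
  | _ j ih =>
    rcases lt_or_ge j p with h | h
    · rw [Nat.mod_eq_of_lt h]
    · have h1 : w (N + j) = w (N + (j - p)) := by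
        rw [show N + j = (N + (j - p)) + p by omega]
        exact hper _ (by omega)
      have h2 : j % p = (j - p) % p := by
        conv_lhs => rw [show j = (j - p) + p by omega]
        exact Nat.add_mod_right _ _
      rw [h1, ih (j - p) (by omega), h2]

private lemma stmt11_w_f {α : Type*} (w : ℕ → α) (N p : ℕ) (hp : 1 ≤ p)
    (hper : ∀ m ≥ N, w (m + p) = w m) (m : ℕ) : w (stmt11f N p m) = w m := by
  unfold stmt11f; split
  · rfl
  · rw [← stmt11_w_mod w N p hp hper (m - N)]
    congr 1; omega

/-- The DFA recognizing prefixes of an eventually periodic word. -/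
private noncomputable def stmt11M {α : Type*} (w : ℕ → α) (N p : ℕ) (hp : 1 ≤ p) :
    DFA α (Option (Fin (N + p))) :=
  haveI := Classical.decEq α
  { step := fun q a => match q with
      | none => none
      | some k => if a = w k.val then some ⟨stmt11f N p (k.val + 1), stmt11f_lt N p _ hp⟩
                  else none
    start := some ⟨0, by omega⟩
    accept := {q | q.isSome} }

private lemma stmt11M_eval_prefix {α : Type*} (w : ℕ → α) (N p : ℕ) (hp : 1 ≤ p)
    (hper : ∀ m ≥ N, w (m + p) = w m) (m : ℕ) :
    (stmt11M w N p hp).eval ((List.range m).map w) =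
      some ⟨stmt11f N p m, stmt11f_lt N p m hp⟩ := by
  induction m with
  | zero =>
    simp only [List.range_zero, List.map_nil]
    have h0 : stmt11f N p 0 = 0 := by unfold stmt11f; simp; omega
    simp only [DFA.eval, DFA.evalFrom, List.foldl_nil]
    unfold stmt11M
    simp only [Option.some.injEq, Fin.mk.injEq]
    exact h0.symm
  | succ m ih =>
    rw [List.range_succ, List.map_append, List.map_singleton, DFA.eval,
        DFA.evalFrom_of_append]
    rw [DFA.eval] at ih
    rw [ih]
    show (stmt11M w N p hp).step _ (w m) = _
    have hw : w m = w (stmt11f N p m) := (stmt11_w_f w N p hp hper m).symm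
    unfold stmt11M
    simp only [hw, if_pos rfl]
    rw [if_pos trivial]
    simp only [Option.some.injEq, Fin.mk.injEq]
    exact stmt11f_step N p m hp

private lemma stmt11M_eval_some {α : Type*} (w : ℕ → α) (N p : ℕ) (hp : 1 ≤ p)
    (hper : ∀ m ≥ N, w (m + p) = w m) (l : List α)
    (h : ((stmt11M w N p hp).eval l).isSome) : l = (List.range l.length).map w := by
  induction l using List.reverseRecOn with
  | nil => simp
  | append_singleton xs a ih =>
    rw [DFA.eval, DFA.evalFrom_of_append] at h
    have hxs : ((stmt11M w N p hp).eval xs).isSome := by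
      by_contra hn
      rw [Option.not_isSome_iff_eq_none] at hn
      rw [DFA.eval] at hn
      rw [hn] at h
      simp [stmt11M, DFA.evalFrom] at h
    have hxse := ih hxs
    have heval : (stmt11M w N p hp).eval xs =
        some ⟨stmt11f N p xs.length, stmt11f_lt N p _ hp⟩ := by
      conv_lhs => rw [hxse]
      exact stmt11M_eval_prefix w N p hp hper xs.length
    rw [DFA.eval] at heval
    rw [heval] at h
    have ha : a = w xs.length := by
      by_contra hne
      have hne' : a ≠ w (stmt11f N p xs.length) := by
        rwa [stmt11_w_f w N p hp hper]
      simp [stmt11M, DFA.evalFrom, hne'] at h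
    rw [List.length_append, List.length_singleton, List.range_succ, List.map_append,
        List.map_singleton, ← hxse, ha]

private lemma stmt11_prefix_add {α : Type*} (w : ℕ → α) (a b : ℕ) :
    (List.range (a + b)).map w =
      (List.range a).map w ++ (List.range b).map (fun i => w (a + i)) := by
  rw [List.range_add, List.map_append, List.map_map]
  rfl

/-- For an infinite word `w` over a finite alphabet, the language of
finite prefixes of `w` is regular iff `w` is eventually periodic. -/
theorem stmt11 {α : Type*} [Fintype α] (w : ℕ → α) :
    Language.IsRegular {l : List α | ∃ m : ℕ, l = (List.range m).map w} ↔
    ∃ N : ℕ, ∃ p ≥ 1, ∀ m ≥ N, w (m + p) = w m := by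
  constructor
  · rintro ⟨σ, fin, M, hM⟩
    -- states reached at prefixes
    set s : ℕ → σ := fun m => M.eval ((List.range m).map w) with hs
    obtain ⟨a, b, hab, heq⟩ := Finite.exists_ne_map_eq_of_infinite s
    -- wlog a < b
    have key : ∀ m n : ℕ, m < n → s m = s n → ∀ j ≥ m, w (j + (n - m)) = w j := by
      intro m n hmn hsmn j hj
      set k := j - m with hk
      have hjk : j = m + k := by omega
      -- the word prefix m ++ segment(n, k+1) is accepted
      have hacc : (List.range m).map w ++
          (List.range (k + 1)).map (fun i => w (n + i)) ∈ M.accepts := by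
        rw [DFA.mem_accepts]
        show M.evalFrom M.start _ ∈ M.accept
        rw [DFA.evalFrom_of_append]
        have : M.evalFrom M.start ((List.range m).map w) = s m := rfl
        rw [this, hsmn]
        have : M.evalFrom (s n) ((List.range (k + 1)).map (fun i => w (n + i))) =
            M.eval ((List.range (n + (k + 1))).map w) := by
          rw [stmt11_prefix_add w n (k + 1), DFA.eval, DFA.evalFrom_of_append]
          rfl
        rw [this]
        have hmem : (List.range (n + (k + 1))).map w ∈ M.accepts := by
          rw [hM]; exact ⟨n + (k + 1), rfl⟩
        rwa [DFA.mem_accepts] at hmem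
      rw [hM] at hacc
      obtain ⟨m', hm'⟩ := hacc
      have hlen : m' = m + (k + 1) := by
        have := congrArg List.length hm'
        simpa using this.symm
      rw [hlen, stmt11_prefix_add w m (k + 1)] at hm'
      have hseg : (List.range (k + 1)).map (fun i => w (n + i)) =
          (List.range (k + 1)).map (fun i => w (m + i)) :=
        List.append_cancel_left hm'
      have hklt : k < k + 1 := Nat.lt_succ_self k
      have := congrArg (fun l => l[k]?) hseg
      simp only [List.getElem?_map, List.getElem?_range hklt] at this
      simp only [Option.map_some] at this
      have hwk : w (n + k) = w (m + k) := Option.some.inj this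
      rw [hjk]
      rw [show m + k + (n - m) = n + k by omega]
      exact hwk
    rcases hab.lt_or_gt with h | h
    · exact ⟨a, b - a, by omega, key a b h heq⟩
    · exact ⟨b, a - b, by omega, key b a h heq.symm⟩
  · rintro ⟨N, p, hp, hper⟩
    refine ⟨Option (Fin (N + p)), inferInstance, stmt11M w N p hp, ?_⟩
    ext l
    rw [DFA.mem_accepts]
    constructor
    · intro h
      exact ⟨l.length, stmt11M_eval_some w N p hp hper l h⟩
    · rintro ⟨m, rfl⟩
      show ((stmt11M w N p hp).eval _).isSome
      rw [stmt11M_eval_prefix w N p hp hper m]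
      rfl
end

section
/- Let (a_n)_{n≥1} be a sequence over F_2 with a_1 = 1 satisfying the PLCP relation a_n + a_{2n} + a_{2n+1} = 0 for all n ≥ 1. If the odd-index subsequence (a_{2n+1})_{n≥0} is 2-automatic, then the full sequence (a_n)_{n≥1} is 2-automatic. -/
/-- If `a` (extended by `a 0 = 0`) has `a 1 = 1` and satisfies the PLCP
relation `a n + a (2n) + a (2n+1) = 0` for all `n ≥ 1`, and the odd-index subsequence
`n ↦ a (2n+1)` is 2-automatic, then `a` is 2-automatic. -/
theorem stmt14 (a : ℕ → ZMod 2) (h0 : a 0 = 0) (h1 : a 1 = 1)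
    (hplcp : ∀ n ≥ 1, a n + a (2 * n) + a (2 * n + 1) = 0)
    (hodd : IsTwoAutomatic fun n => a (2 * n + 1)) :
    IsTwoAutomatic a := by
  classical
  set b : ℕ → ZMod 2 := fun n => a (2 * n + 1) with hb
  set δ : ℕ → ZMod 2 := fun n => if n = 0 then 1 else 0 with hδ
  -- key recurrence
  have hkey : ∀ m : ℕ, a (2 * m) = a m + a (2 * m + 1) + δ m := by
    intro m
    rcases Nat.eq_zero_or_pos m with rfl | hm
    · simp [hδ, h0, h1]; decide
    · have h := hplcp m hm
      have hm0 : (m ≠ 0) := Nat.pos_iff_ne_zero.mp hm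
      simp only [hδ, if_neg hm0]
      revert h
      generalize a m = x; generalize a (2 * m) = y; generalize a (2 * m + 1) = z
      revert x y z; decide
  set G : Set (ℕ → ZMod 2) := twoKernel b ∪ {a, δ} with hG
  have hGfin : G.Finite := hodd.union (Set.toFinite {a, δ})
  set S : Submodule (ZMod 2) (ℕ → ZMod 2) := Submodule.span (ZMod 2) G with hS
  have hSfin : (S : Set (ℕ → ZMod 2)).Finite := by
    have hfg : S.FG := Submodule.fg_span hGfin
    haveI : Module.Finite (ZMod 2) S := (Module.Finite.iff_fg).mpr hfg
    haveI : Finite S := Module.finite_of_finite (ZMod 2)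
    exact Set.toFinite _
  -- all kernel elements of a lie in S
  have hmem : ∀ k j : ℕ, j < 2 ^ k → (fun n => a (2 ^ k * n + j)) ∈ S := by
    intro k
    induction k with
    | zero =>
        intro j hj
        interval_cases j
        have : (fun n => a (2 ^ 0 * n + 0)) = a := by funext n; simp
        rw [this]
        exact Submodule.subset_span (Or.inr (Or.inl rfl))
    | succ k ih =>
        intro j hj
        rcases Nat.even_or_odd j with ⟨j', rfl⟩ | ⟨j', rfl⟩
        · -- even case: j = 2 * j'
          have hj' : j' < 2 ^ k := by
            have : 2 ^ (k + 1) = 2 * 2 ^ k := by ring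
            omega
          have heq : (fun n => a (2 ^ (k + 1) * n + (j' + j'))) =
              (fun n => a (2 ^ k * n + j')) + (fun n => b (2 ^ k * n + j')) +
              (fun n => δ (2 ^ k * n + j')) := by
            funext n
            have h2 : 2 ^ (k + 1) * n + (j' + j') = 2 * (2 ^ k * n + j') := by ring
            rw [h2, hkey]
            simp [hb, Pi.add_apply]
          rw [heq]
          have m1 : (fun n => a (2 ^ k * n + j')) ∈ S := ih j' hj'
          have m2 : (fun n => b (2 ^ k * n + j')) ∈ S :=
            Submodule.subset_span (Or.inl ⟨k, j', hj', rfl⟩)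
          have m3 : (fun n => δ (2 ^ k * n + j')) ∈ S := by
            rcases Nat.eq_zero_or_pos j' with rfl | hpos
            · have : (fun n => δ (2 ^ k * n + 0)) = δ := by
                funext n
                simp only [hδ, Nat.add_zero]
                have : 2 ^ k * n = 0 ↔ n = 0 := by
                  constructor
                  · intro h; rcases Nat.mul_eq_zero.mp h with h | h
                    · exact absurd h (Nat.pos_iff_ne_zero.mp (by positivity : 0 < 2 ^ k))
                    · exact h
                  · intro h; simp [h]
                simp [this]
              rw [this]
              exact Submodule.subset_span (Or.inr (Or.inr rfl))
            · have : (fun n => δ (2 ^ k * n + j')) = 0 := by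
                funext n
                simp only [hδ, Pi.zero_apply]
                have : 2 ^ k * n + j' ≠ 0 := by omega
                simp [this, hpos.ne']
              rw [this]
              exact S.zero_mem
          exact S.add_mem (S.add_mem m1 m2) m3
        · -- odd case: j = 2 * j' + 1
          have hj' : j' < 2 ^ k := by
            have : 2 ^ (k + 1) = 2 * 2 ^ k := by ring
            omega
          have heq : (fun n => a (2 ^ (k + 1) * n + (2 * j' + 1))) =
              (fun n => b (2 ^ k * n + j')) := by
            funext n
            have h2 : 2 ^ (k + 1) * n + (2 * j' + 1) = 2 * (2 ^ k * n + j') + 1 := by ring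
            rw [h2]
          rw [heq]
          exact Submodule.subset_span (Or.inl ⟨k, j', hj', rfl⟩)
  have hsub : twoKernel a ⊆ (S : Set (ℕ → ZMod 2)) := by
    rintro t ⟨k, j, hj, rfl⟩
    exact hmem k j hj
  exact hSfin.subset hsub
end

section
/- A sequence (a_n)_{n≥1} over F_2 with a_1 = 1 and satisfying the PLCP relation a_{2n+1} = a_{2n} + a_n for all n ≥ 1 is 2-automatic if and only if the sequence (a_{2n+1})_{n≥0} is 2-automatic. Equivalently, the bijection φ₂ sending b = (b_n)_{n≥0} to the PLCP sequence a with a_1 = 1, a_{2n+1} = b_n (n ≥ 0 interpreting via the shift), a_{2n} = a_n + b_n, preserves and reflects 2-automaticity: φ₂(b) is 2-automatic iff b is 2-automatic. -/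
/-- A sequence `a` over `F₂` (extended by `a 0 = 0`) with `a 1 = 1` and
satisfying the PLCP relation `a (2n+1) = a (2n) + a n` for all `n ≥ 1` is 2-automatic
iff its odd-index subsequence `n ↦ a (2n+1)` is 2-automatic. -/
theorem stmt16 (a : ℕ → ZMod 2) (h0 : a 0 = 0) (h1 : a 1 = 1)
    (hplcp : ∀ n ≥ 1, a (2 * n + 1) = a (2 * n) + a n) :
    IsTwoAutomatic a ↔ IsTwoAutomatic fun n => a (2 * n + 1) := by
  set b : ℕ → ZMod 2 := fun n => a (2 * n + 1) with hbdef
  have h2 : ∀ x : ZMod 2, x + x = 0 := by decide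
  constructor
  · intro ha
    apply ha.subset
    rintro t ⟨k, j, hj, rfl⟩
    refine ⟨k + 1, 2 * j + 1, by rw [pow_succ]; omega, ?_⟩
    funext n
    show a (2 * (2 ^ k * n + j) + 1) = a (2 ^ (k + 1) * n + (2 * j + 1))
    congr 1
    rw [pow_succ]; ring
  · intro hb
    set δ : ℕ → ZMod 2 := fun n => if n = 0 then 1 else 0 with hδdef
    have hkey : ∀ m, a (2 * m) = b m + a m + δ m := by
      intro m
      rcases Nat.eq_zero_or_pos m with rfl | hm
      · simp [hbdef, hδdef, h0, h1]; decide
      · have hp := hplcp m hm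
        have : δ m = 0 := by simp [hδdef, Nat.pos_iff_ne_zero.mp hm]
        rw [this, add_zero, hbdef]
        show a (2 * m) = a (2 * m + 1) + a m
        rw [hp, add_assoc, h2, add_zero]
    set S : Set (ℕ → ZMod 2) := twoKernel b ∪ {a, δ} with hSdef
    have hSfin : S.Finite := hb.union (Set.Finite.insert _ (Set.finite_singleton _))
    set V : Submodule (ZMod 2) (ℕ → ZMod 2) := Submodule.span (ZMod 2) S with hVdef
    have hfd : FiniteDimensional (ZMod 2) V := FiniteDimensional.span_of_finite _ hSfin
    have hVfin : Finite V := Module.finite_of_finite (ZMod 2)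
    have hVsetfin : (V : Set (ℕ → ZMod 2)).Finite := V.carrier.toFinite
    have haV : a ∈ V := Submodule.subset_span (Or.inr (Or.inl rfl))
    have hδV : δ ∈ V := Submodule.subset_span (Or.inr (Or.inr rfl))
    have hmem : ∀ k, ∀ j < 2 ^ k, (fun n => a (2 ^ k * n + j)) ∈ V := by
      intro k
      induction k with
      | zero =>
        intro j hj
        have hj0 : j = 0 := by omega
        subst hj0
        have : (fun n => a (2 ^ 0 * n + 0)) = a := by funext n; simp
        rw [this]; exact haV
      | succ k ih =>
        intro j hj
        rcases Nat.even_or_odd j with ⟨j', hj'⟩ | ⟨j', hj'⟩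
        · -- even : j = j' + j'
          have hjlt : j' < 2 ^ k := by rw [pow_succ] at hj; omega
          have hbm : (fun n => b (2 ^ k * n + j')) ∈ V :=
            Submodule.subset_span (Or.inl ⟨k, j', hjlt, rfl⟩)
          have ham := ih j' hjlt
          have hdm : (fun n : ℕ => δ (2 ^ k * n + j')) ∈ V := by
            rcases Nat.eq_zero_or_pos j' with rfl | hj0
            · have : (fun n : ℕ => δ (2 ^ k * n + 0)) = δ := by
                funext n
                simp only [hδdef, Nat.add_zero]
                congr 1
                simp [pow_ne_zero, Nat.mul_eq_zero]
              rw [this]; exact hδV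
            · have : (fun n : ℕ => δ (2 ^ k * n + j')) = (fun _ => 0) := by
                funext n
                simp [hδdef]; omega
              rw [this]; exact V.zero_mem
          have hsum := V.add_mem (V.add_mem hbm ham) hdm
          have heq : (fun n => a (2 ^ (k + 1) * n + j)) =
              ((fun n => b (2 ^ k * n + j')) + (fun n => a (2 ^ k * n + j')) +
                (fun n : ℕ => δ (2 ^ k * n + j'))) := by
            funext n
            simp only [Pi.add_apply]
            rw [← hkey (2 ^ k * n + j')]
            congr 1
            subst hj'
            rw [pow_succ]; ring
          rw [heq]; exact hsum
        · -- odd : j = 2 * j' + 1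
          have hjlt : j' < 2 ^ k := by rw [pow_succ] at hj; omega
          have heq : (fun n => a (2 ^ (k + 1) * n + j)) = (fun n => b (2 ^ k * n + j')) := by
            funext n
            show a (2 ^ (k + 1) * n + j) = a (2 * (2 ^ k * n + j') + 1)
            congr 1
            subst hj'
            rw [pow_succ]; ring
          rw [heq]
          exact Submodule.subset_span (Or.inl ⟨k, j', hjlt, rfl⟩)
    apply hVsetfin.subset
    rintro t ⟨k, j, hj, rfl⟩
    exact hmem k j hj
end
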